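/- arXiv:2408.08587 — 4 statements merged into one kernel-verified Lean document; each statement's English description precedes it below -/
import Mathlib

section
/- For any countable poset L, the Scott space Σ(σ(L)) of the complete lattice σ(L) of Scott open subsets of L (ordered by inclusion) is a sober topological space. -/
open Topology TopologicalSpace

/-- `σ(L)`, the complete lattice of Scott open subsets of `L`, realized as the lattice of
open sets of the Scott space `ΣL`. -/
abbrev ScottOpens (L : Type) [Preorder L] : Type :=
  @TopologicalSpace.Opens L (Topology.scott L Set.univ)

section Aux

variable {L : Type} [PartialOrder L]

/-- In the Scott topology on `σ(L)`, the set of Scott opens containing a fixed point is open. -/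
private lemma pointOpen_isOpen (y : L) :
    IsOpen[Topology.scott (ScottOpens L) Set.univ] {V : ScottOpens L | y ∈ V} := by
  letI tL : TopologicalSpace L := Topology.scott L Set.univ
  letI : TopologicalSpace (ScottOpens L) := Topology.scott (ScottOpens L) Set.univ
  haveI : Topology.IsScott (ScottOpens L) Set.univ := ⟨rfl⟩
  rw [Topology.IsScott.isOpen_iff_isUpperSet_and_dirSupInaccOn (D := Set.univ)]
  constructor
  · intro V W hVW hyV
    exact hVW hyV
  · intro d _ hdne hddir a hlub ha
    have hsup : sSup d = a := hlub.sSup_eq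
    rw [← hsup] at ha
    rcases Opens.mem_sSup.mp ha with ⟨V, hVd, hyV⟩
    exact ⟨V, hVd, hyV⟩

end Aux

/-- For any countable poset `L`, the Scott space `Σ(σ(L))` of the complete lattice
`σ(L)` of Scott open subsets of `L` (ordered by inclusion) is sober, i.e. it is T₀ and every
irreducible closed subset is the closure of a (unique) point. -/
theorem scottSpace_scottOpens_sober (L : Type) [PartialOrder L] [Countable L] :
    @T0Space (ScottOpens L) (Topology.scott (ScottOpens L) Set.univ) ∧
    @QuasiSober (ScottOpens L) (Topology.scott (ScottOpens L) Set.univ) := by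
  letI tL : TopologicalSpace L := Topology.scott L Set.univ
  haveI : Topology.IsScott L Set.univ := ⟨rfl⟩
  letI tO : TopologicalSpace (ScottOpens L) := Topology.scott (ScottOpens L) Set.univ
  haveI : Topology.IsScott (ScottOpens L) Set.univ := ⟨rfl⟩
  refine ⟨inferInstance, ?_⟩
  constructor
  intro S hS hSc
  -- S is a lower set, closed under directed sups
  have hlow : IsLowerSet S := Topology.IsScott.isLowerSet_of_isClosed hSc
  have hdsc : DirSupClosed S := Topology.IsScott.dirSupClosed_of_isClosed hSc
  -- Main claim: the candidate generic point sSup S belongs to S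
  have hgS : sSup S ∈ S := by
    rcases Set.eq_empty_or_nonempty ((sSup S : ScottOpens L) : Set L) with hge | hgne
    · -- degenerate case : ⋃ S = ∅, hence S = {⊥} and sSup S = ⊥ ∈ S
      obtain ⟨V₀, hV₀⟩ := hS.1
      have hsub : (V₀ : Set L) ⊆ ((sSup S : ScottOpens L) : Set L) := by
        exact_mod_cast le_sSup hV₀
      have : V₀ = sSup S := by
        apply Opens.ext
        rw [hge]
        exact Set.eq_empty_of_subset_empty (hge ▸ hsub)
      exact this ▸ hV₀
    · -- main case
      -- enumerate the (countable, nonempty) set ⋃ S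
      obtain ⟨z, hz⟩ := Set.Countable.exists_eq_range
        (Set.to_countable ((sSup S : ScottOpens L) : Set L)) hgne
      have hzg : ∀ i, z i ∈ ((sSup S : ScottOpens L) : Set L) := by
        intro i; rw [hz]; exact ⟨i, rfl⟩
      have hsurj : ∀ p ∈ ((sSup S : ScottOpens L) : Set L), ∃ i, z i = p := by
        intro p hp; rw [hz] at hp; exact hp
      -- membership in sSup S gives a member of S containing the point
      have hmemS : ∀ p ∈ ((sSup S : ScottOpens L) : Set L), ∃ V ∈ S, p ∈ V := by
        intro p hp
        exact Opens.mem_sSup.mp hp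
      -- via irreducibility: a member of S containing any finite initial segment of z
      have hmeet : ∀ m : ℕ, (S ∩ {V : ScottOpens L | ∀ j ≤ m, z j ∈ V}).Nonempty := by
        intro m
        induction m with
        | zero =>
          obtain ⟨V, hVS, hzV⟩ := hmemS (z 0) (hzg 0)
          refine ⟨V, hVS, fun j hj => ?_⟩
          rw [Nat.le_zero.mp hj]
          exact hzV
        | succ m ih =>
          have hu : IsOpen ({V : ScottOpens L | ∀ j ≤ m, z j ∈ V}) := by
            have heq : {V : ScottOpens L | ∀ j ≤ m, z j ∈ V} =
                ⋂ (j : Fin (m + 1)), {V : ScottOpens L | z j ∈ V} := by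
              ext V
              simp only [Set.mem_setOf_eq, Set.mem_iInter]
              exact ⟨fun h j => h j (Nat.lt_succ_iff.mp j.2),
                fun h j hj => h ⟨j, Nat.lt_succ_of_le hj⟩⟩
            rw [heq]
            exact isOpen_iInter_of_finite fun j => pointOpen_isOpen (z j)
          have hv : IsOpen ({V : ScottOpens L | z (m + 1) ∈ V}) := pointOpen_isOpen _
          have hvne : (S ∩ {V : ScottOpens L | z (m + 1) ∈ V}).Nonempty := by
            obtain ⟨V, hVS, hzV⟩ := hmemS (z (m + 1)) (hzg (m + 1))
            exact ⟨V, hVS, hzV⟩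
          obtain ⟨V, hVS, hV1, hV2⟩ := hS.2 _ _ hu hv ih hvne
          refine ⟨V, hVS, fun j hj => ?_⟩
          rcases Nat.lt_succ_iff_lt_or_eq.mp (Nat.lt_succ_of_le hj) with h | h
          · exact hV1 j (Nat.lt_succ_iff.mp h)
          · rw [h]; exact hV2
      -- choose members A m of S with {z 0, ..., z m} ⊆ A m
      have hcov : ∀ m : ℕ, ∃ A : ScottOpens L, A ∈ S ∧ ∀ j ≤ m, z j ∈ A := by
        intro m; obtain ⟨A, hAS, hAZ⟩ := hmeet m; exact ⟨A, hAS, hAZ⟩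
      choose A hAS hAZ using hcov
      -- upper-set and dir-sup-inaccessibility facts for Scott opens of L
      have hup : ∀ (W : ScottOpens L), IsUpperSet (W : Set L) := fun W =>
        Topology.IsScott.isUpperSet_of_isOpen (D := Set.univ) W.2
      have hinacc : ∀ (W : ScottOpens L), DirSupInaccOn Set.univ (W : Set L) := fun W =>
        ((Topology.IsScott.isOpen_iff_isUpperSet_and_dirSupInaccOn (D := Set.univ)).mp W.2).2
      -- the anchored diagonal sets
      set Dset : ℕ → Set L := fun n =>
        {p : L | p ∈ ((sSup S : ScottOpens L) : Set L) ∧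
          ∃ i : ℕ, z i ≤ p ∧ ∀ j, n ≤ j → j ≤ i → p ∈ A j} with hDset
      -- every element of Dset n belongs to every A m for m ≥ n
      have hDsub : ∀ n p, p ∈ Dset n → ∀ m, n ≤ m → p ∈ (A m : Set L) := by
        intro n p hp m hnm
        obtain ⟨hpg, i, hzi, hAll⟩ := hp
        by_cases him : m ≤ i
        · exact hAll m hnm him
        · have hi : i ≤ m := by omega
          exact hup (A m) hzi (hAZ m i hi)
      -- Dset n is Scott open
      have hDopen : ∀ n, IsOpen (Dset n) := by
        intro n
        rw [Topology.IsScott.isOpen_iff_isUpperSet_and_dirSupInaccOn (D := Set.univ)]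
        constructor
        · intro p q hpq hp
          obtain ⟨hpg, i, hzi, hAll⟩ := hp
          exact ⟨hup (sSup S) hpq hpg, i, le_trans hzi hpq,
            fun j h1 h2 => hup (A j) hpq (hAll j h1 h2)⟩
        · intro E _ hEne hEdir e hlub he
          -- pick an anchor d₀ ∈ E ∩ sSup S
          obtain ⟨d₀, hd₀E, hd₀g⟩ :=
            hinacc (sSup S) (Set.mem_univ E) hEne hEdir hlub he.1
          obtain ⟨i₀, hi₀⟩ := hsurj d₀ hd₀g
          -- e lies in all A m for m ≥ n
          have heA : ∀ m, n ≤ m → e ∈ (A m : Set L) := hDsub n e he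
          -- build an element of E above d₀ lying in A j for all n ≤ j ≤ k
          have key : ∀ k : ℕ, ∃ d ∈ E, d₀ ≤ d ∧ ∀ j, n ≤ j → j ≤ k → d ∈ (A j : Set L) := by
            intro k
            induction k with
            | zero =>
              by_cases hn0 : n = 0
              · obtain ⟨d', hd'E, hd'A⟩ :=
                  hinacc (A 0) (Set.mem_univ E) hEne hEdir hlub (heA 0 (by omega))
                obtain ⟨d, hdE, h1, h2⟩ := hEdir d₀ hd₀E d' hd'E
                refine ⟨d, hdE, h1, fun j hnj hj0 => ?_⟩
                rw [Nat.le_zero.mp hj0]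
                exact hup (A 0) h2 hd'A
              · exact ⟨d₀, hd₀E, le_rfl, fun j hnj hj0 => by omega⟩
            | succ k ih =>
              obtain ⟨d, hdE, hd₀d, hdA⟩ := ih
              by_cases hnk : n ≤ k + 1
              · obtain ⟨d', hd'E, hd'A⟩ :=
                  hinacc (A (k + 1)) (Set.mem_univ E) hEne hEdir hlub (heA (k + 1) hnk)
                obtain ⟨d'', hd''E, h1, h2⟩ := hEdir d hdE d' hd'E
                refine ⟨d'', hd''E, le_trans hd₀d h1, fun j hnj hjk => ?_⟩
                by_cases hjk' : j ≤ k
                · exact hup (A j) h1 (hdA j hnj hjk')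
                · have hjeq : j = k + 1 := by omega
                  rw [hjeq]
                  exact hup (A (k + 1)) h2 hd'A
              · exact ⟨d, hdE, hd₀d, fun j hnj hjk => by omega⟩
          obtain ⟨d, hdE, hd₀d, hdA⟩ := key i₀
          have hzd : z i₀ ≤ d := by rw [hi₀]; exact hd₀d
          exact ⟨d, hdE, hup (sSup S) hd₀d hd₀g, i₀, hzd, hdA⟩
      -- the opens D n
      set D : ℕ → ScottOpens L := fun n => ⟨Dset n, hDopen n⟩ with hD
      -- D n ∈ S (it is below A n ∈ S)
      have hDS : ∀ n, D n ∈ S := by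
        intro n
        have hle : D n ≤ A n :=
          SetLike.coe_subset_coe.mp (fun p hp => hDsub n p hp n le_rfl)
        exact hlow hle (hAS n)
      -- the family (D n) is monotone, hence directed
      have hmono : ∀ n m : ℕ, n ≤ m → D n ≤ D m := by
        intro n m hnm
        refine SetLike.coe_subset_coe.mp (fun p hp => ?_)
        obtain ⟨hpg, i, hzi, hAll⟩ := hp
        exact ⟨hpg, i, hzi, fun j h1 h2 => hAll j (le_trans hnm h1) h2⟩
      -- its least upper bound is sSup S
      have hlubD : IsLUB (Set.range D) (sSup S) := by
        constructor
        · rintro W ⟨n, rfl⟩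
          exact SetLike.coe_subset_coe.mp (fun p (hp : p ∈ Dset n) => hp.1)
        · intro W hW
          refine SetLike.coe_subset_coe.mp (fun p hp => ?_)
          obtain ⟨i, rfl⟩ := hsurj p hp
          have hpD : z i ∈ (D i : Set L) := by
            refine ⟨hp, i, le_rfl, fun j h1 h2 => ?_⟩
            have : j = i := le_antisymm h2 h1
            rw [this]
            exact hAZ i i le_rfl
          exact SetLike.coe_subset_coe.mpr (hW ⟨i, rfl⟩) hpD
      -- conclude by closure of S under directed sups
      have hdirD : DirectedOn (· ≤ ·) (Set.range D) := by
        rintro a ⟨n, rfl⟩ b ⟨m, rfl⟩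
        exact ⟨D (max n m), ⟨max n m, rfl⟩,
          hmono n (max n m) (le_max_left n m), hmono m (max n m) (le_max_right n m)⟩
      have hrange : Set.range D ⊆ S := by
        rintro W ⟨n, rfl⟩
        exact hDS n
      have hne : (Set.range D).Nonempty := ⟨D 0, ⟨0, rfl⟩⟩
      exact hdsc hrange hne hdirD hlubD
  -- conclude: sSup S is a generic point of S
  refine ⟨sSup S, ?_⟩
  rw [isGenericPoint_def, Topology.IsScott.closure_singleton]
  apply Set.eq_of_subset_of_subset
  · intro V hV
    exact hlow hV hgS
  · intro V hV
    exact le_sSup hV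
end

section
/- For any two countable posets L and P, writing L* = σ(L) and P* = σ(P) for the complete lattices of Scott open sets ordered by inclusion, the Scott space Σ(L* × P*) of the product poset L* × P* is sober. -/
open Topology TopologicalSpace

open Set

section Auxiliary

/-- Pigeonhole for directed sets: if a directed set is covered by finitely many pieces,
one of the pieces is cofinal. -/
lemma directedOn_finset_cofinal {α ι : Type*} [Preorder α] (S : ι → Set α) :
    ∀ (F : Finset ι) (D : Set α), DirectedOn (· ≤ ·) D → D.Nonempty →
      (∀ g ∈ D, ∃ i ∈ F, g ∈ S i) →
      ∃ i ∈ F, ∀ g ∈ D, ∃ g', (g' ∈ D ∧ g' ∈ S i) ∧ g ≤ g' := by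
  classical
  intro F
  induction F using Finset.induction_on with
  | empty =>
    intro D _ hne hcov
    obtain ⟨g, hg⟩ := hne
    obtain ⟨i, hi, _⟩ := hcov g hg
    exact absurd hi (by simp)
  | @insert i F hiF ih =>
    intro D hdir hne hcov
    by_cases hcof : ∀ g ∈ D, ∃ g', (g' ∈ D ∧ g' ∈ S i) ∧ g ≤ g'
    · exact ⟨i, Finset.mem_insert_self i F, hcof⟩
    · push_neg at hcof
      obtain ⟨g₀, hg₀D, hg₀⟩ := hcof
      have hdir' : DirectedOn (· ≤ ·) (D ∩ {g | g₀ ≤ g}) := by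
        rintro x ⟨hxD, hx0⟩ y ⟨hyD, _⟩
        obtain ⟨z, hzD, hxz, hyz⟩ := hdir x hxD y hyD
        exact ⟨z, ⟨hzD, le_trans hx0 hxz⟩, hxz, hyz⟩
      have hne' : (D ∩ {g | g₀ ≤ g}).Nonempty := ⟨g₀, hg₀D, le_refl g₀⟩
      have hcov' : ∀ g ∈ D ∩ {g | g₀ ≤ g}, ∃ j ∈ F, g ∈ S j := by
        rintro g ⟨hgD, hg0⟩
        obtain ⟨j, hj, hgSj⟩ := hcov g hgD
        rcases Finset.mem_insert.mp hj with rfl | hjF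
        · exact absurd hg0 (hg₀ g ⟨hgD, hgSj⟩)
        · exact ⟨j, hjF, hgSj⟩
      obtain ⟨j, hjF, hj⟩ := ih (D ∩ {g | g₀ ≤ g}) hdir' hne' hcov'
      refine ⟨j, Finset.mem_insert_of_mem hjF, ?_⟩
      intro g hgD
      obtain ⟨z, hzD, hgz, h0z⟩ := hdir g hgD g₀ hg₀D
      obtain ⟨g', ⟨⟨hg'D, hg'0⟩, hg'S⟩, hzg'⟩ := hj z ⟨hzD, h0z⟩
      exact ⟨g', ⟨hg'D, hg'S⟩, le_trans hgz hzg'⟩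

/-- The key lemma: in a Scott space, given a sequence of open sets `a k` such that each point
of the open set `W` belongs to all but finitely many of the `a k`, the intersection
`W ∩ ⋂_{k ≥ n} a k` is Scott open. -/
lemma isOpen_inter_tail_iInter {α : Type*} [Preorder α] [TopologicalSpace α]
    [Topology.IsScott α Set.univ] {W : Set α} (hW : IsOpen W)
    {a : ℕ → Set α} (ha : ∀ k, IsOpen (a k)) {r : α → ℕ}
    (hr : ∀ w ∈ W, ∀ k, r w ≤ k → w ∈ a k) (n : ℕ) :
    IsOpen (W ∩ ⋂ (k : ℕ) (_ : n ≤ k), a k) := by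
  have hWu : IsUpperSet W := Topology.IsScott.isUpperSet_of_isOpen (D := Set.univ) hW
  have hau : ∀ k, IsUpperSet (a k) := fun k =>
    Topology.IsScott.isUpperSet_of_isOpen (D := Set.univ) (ha k)
  have hWdi : DirSupInacc W := dirSupInaccOn_univ.mp
    ((Topology.IsScott.isOpen_iff_isUpperSet_and_dirSupInaccOn (D := Set.univ)).mp hW).2
  have hadi : ∀ k, DirSupInacc (a k) := fun k => dirSupInaccOn_univ.mp
    ((Topology.IsScott.isOpen_iff_isUpperSet_and_dirSupInaccOn (D := Set.univ)).mp (ha k)).2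
  rw [Topology.IsScott.isOpen_iff_isUpperSet_and_dirSupInaccOn (D := Set.univ)]
  constructor
  · -- upper set
    intro x y hxy hx
    obtain ⟨hx1, hx2⟩ := hx
    refine ⟨hWu hxy hx1, ?_⟩
    simp only [mem_iInter] at hx2 ⊢
    intro k hk
    exact (hau k) hxy (hx2 k hk)
  · rw [dirSupInaccOn_univ]
    intro d hne hdir s hlub hs
    obtain ⟨hsW, hstail⟩ := hs
    simp only [mem_iInter] at hstail
    -- get an element of d inside W
    obtain ⟨g₀, hg₀d, hg₀W⟩ := hWdi hne hdir hlub hsW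
    -- restrict d above g₀
    have hd'dir : DirectedOn (· ≤ ·) (d ∩ {g | g₀ ≤ g}) := by
      rintro x ⟨hxD, hx0⟩ y ⟨hyD, _⟩
      obtain ⟨z, hzD, hxz, hyz⟩ := hdir x hxD y hyD
      exact ⟨z, ⟨hzD, le_trans hx0 hxz⟩, hxz, hyz⟩
    have hd'ne : (d ∩ {g | g₀ ≤ g}).Nonempty := ⟨g₀, hg₀d, le_refl g₀⟩
    have hd'lub : IsLUB (d ∩ {g | g₀ ≤ g}) s := by
      constructor
      · exact fun x hx => hlub.1 hx.1
      · intro b hb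
        apply hlub.2
        intro g hgd
        obtain ⟨z, hzd, hgz, h0z⟩ := hdir g hgd g₀ hg₀d
        exact le_trans hgz (hb ⟨hzd, h0z⟩)
    by_cases hcase : ∃ g ∈ d ∩ {g | g₀ ≤ g}, ∀ k, n ≤ k → g ∈ a k
    · obtain ⟨g, ⟨hgd, hg0⟩, hgk⟩ := hcase
      refine ⟨g, hgd, hWu hg0 hg₀W, ?_⟩
      simp only [mem_iInter]
      exact hgk
    · push_neg at hcase
      -- every element of d above g₀ escapes some `a k`, `k ≥ n`; such `k` is `< r g₀`
      have hcov : ∀ g ∈ d ∩ {g | g₀ ≤ g}, ∃ k ∈ Finset.Ico n (r g₀), g ∈ {x | x ∉ a k} := by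
        rintro g hg
        obtain ⟨k, hkn, hk⟩ := hcase g hg
        have hg₀k : g₀ ∉ a k := fun h => hk ((hau k) hg.2 h)
        have hkr : k < r g₀ := by
          by_contra h
          push_neg at h
          exact hg₀k (hr g₀ hg₀W k h)
        exact ⟨k, Finset.mem_Ico.mpr ⟨hkn, hkr⟩, hk⟩
      obtain ⟨k, hkIco, hcof⟩ := directedOn_finset_cofinal (fun k => {x | x ∉ a k})
        (Finset.Ico n (r g₀)) (d ∩ {g | g₀ ≤ g}) hd'dir hd'ne hcov
      obtain ⟨hkn, _⟩ := Finset.mem_Ico.mp hkIco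
      -- the cofinal piece avoiding `a k` is directed with lub `s ∈ a k`: contradiction
      have hd''dir : DirectedOn (· ≤ ·) ((d ∩ {g | g₀ ≤ g}) ∩ {x | x ∉ a k}) := by
        rintro x ⟨hx, _⟩ y ⟨hy, _⟩
        obtain ⟨z, hz, hxz, hyz⟩ := hd'dir x hx y hy
        obtain ⟨g', hg'mem, hzg'⟩ := hcof z hz
        exact ⟨g', hg'mem, hxz.trans hzg', hyz.trans hzg'⟩
      have hd''ne : ((d ∩ {g | g₀ ≤ g}) ∩ {x | x ∉ a k}).Nonempty := by
        obtain ⟨g', hg'mem, _⟩ := hcof g₀ ⟨hg₀d, le_refl g₀⟩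
        exact ⟨g', hg'mem⟩
      have hd''lub : IsLUB ((d ∩ {g | g₀ ≤ g}) ∩ {x | x ∉ a k}) s := by
        constructor
        · exact fun x hx => hd'lub.1 hx.1
        · intro b hb
          apply hd'lub.2
          intro g hg
          obtain ⟨g', hg'mem, hgg'⟩ := hcof g hg
          exact hgg'.trans (hb hg'mem)
      obtain ⟨g, hgmem, hgak⟩ := (hadi k) hd''ne hd''dir hd''lub (hstail k hkn)
      exact absurd hgak hgmem.2

/-- In a preirreducible set, finitely many open sets which each meet the set meet it jointly. -/
lemma preirreducible_finset_inter {X : Type*} [TopologicalSpace X] {A : Set X}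
    (hA : IsPreirreducible A) (hne : A.Nonempty) {ι : Type*} (E : Finset ι)
    (T : ι → Set X) (hT : ∀ i ∈ E, IsOpen (T i)) (hm : ∀ i ∈ E, (A ∩ T i).Nonempty) :
    (A ∩ ⋂ i ∈ E, T i).Nonempty := by
  classical
  induction E using Finset.induction_on with
  | empty => simpa using hne
  | @insert i E hiE ih =>
    have hrest : (A ∩ ⋂ j ∈ E, T j).Nonempty :=
      ih (fun j hj => hT j (Finset.mem_insert_of_mem hj))
        (fun j hj => hm j (Finset.mem_insert_of_mem hj))
    have hTopen : IsOpen (⋂ j ∈ E, T j) :=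
      isOpen_biInter_finset (fun j hj => hT j (Finset.mem_insert_of_mem hj))
    have := hA (T i) (⋂ j ∈ E, T j) (hT i (Finset.mem_insert_self i E)) hTopen
      (hm i (Finset.mem_insert_self i E)) hrest
    rwa [Finset.set_biInter_insert]

end Auxiliary

/-- For any two countable posets `L` and `P`, the Scott space `Σ(σ(L) × σ(P))` of
the product poset `σ(L) × σ(P)` (componentwise order) is sober, i.e. it is T₀ and every
irreducible closed subset is the closure of a (unique) point. -/
theorem scottSpace_prod_scottOpens_sober (L P : Type) [PartialOrder L] [PartialOrder P]
    [Countable L] [Countable P] :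
    @T0Space (ScottOpens L × ScottOpens P)
        (Topology.scott (ScottOpens L × ScottOpens P) Set.univ) ∧
    @QuasiSober (ScottOpens L × ScottOpens P)
        (Topology.scott (ScottOpens L × ScottOpens P) Set.univ) := by
  classical
  letI tL : TopologicalSpace L := Topology.scott L Set.univ
  haveI hsL : Topology.IsScott L Set.univ := ⟨rfl⟩
  letI tP : TopologicalSpace P := Topology.scott P Set.univ
  haveI hsP : Topology.IsScott P Set.univ := ⟨rfl⟩
  set C := ScottOpens L × ScottOpens P with hC
  letI tC : TopologicalSpace C := Topology.scott C Set.univ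
  haveI hsC : Topology.IsScott C Set.univ := ⟨rfl⟩
  obtain ⟨f, hf⟩ := Countable.exists_injective_nat L
  obtain ⟨g, hg⟩ := Countable.exists_injective_nat P
  constructor
  · exact inferInstance
  · refine ⟨fun {S} hSirr hScl => ?_⟩
    have hlow : IsLowerSet S := Topology.IsScott.isLowerSet_of_isClosed hScl
    have hdsc : DirSupClosed S := Topology.IsScott.dirSupClosed_of_isClosed hScl
    set W : C := sSup S with hWdef
    have hlubS : IsLUB S W := isLUB_sSup S
    have hlub1 : IsLUB (Prod.fst '' S) W.1 := (isLUB_prod.mp hlubS).1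
    have hlub2 : IsLUB (Prod.snd '' S) W.2 := (isLUB_prod.mp hlubS).2
    -- the basic point-opens of C
    set Q1 : L → Set C := fun y => {V : C | y ∈ V.1} with hQ1
    set Q2 : P → Set C := fun z => {V : C | z ∈ V.2} with hQ2
    have hQ1open : ∀ y : L, IsOpen (Q1 y) := by
      intro y
      rw [Topology.IsScott.isOpen_iff_isUpperSet_and_dirSupInaccOn (D := Set.univ)]
      constructor
      · intro V V' hVV' hy
        exact (SetLike.coe_subset_coe.mpr hVV'.1) hy
      · rw [dirSupInaccOn_univ]
        intro d hne hdir s hlubd hys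
        have h1 : IsLUB (Prod.fst '' d) s.1 := (isLUB_prod.mp hlubd).1
        have : y ∈ sSup (Prod.fst '' d) := by rw [h1.sSup_eq]; exact hys
        obtain ⟨u, ⟨V, hVd, rfl⟩, hyu⟩ := Opens.mem_sSup.mp this
        exact ⟨V, hVd, hyu⟩
    have hQ2open : ∀ z : P, IsOpen (Q2 z) := by
      intro z
      rw [Topology.IsScott.isOpen_iff_isUpperSet_and_dirSupInaccOn (D := Set.univ)]
      constructor
      · intro V V' hVV' hz
        exact (SetLike.coe_subset_coe.mpr hVV'.2) hz
      · rw [dirSupInaccOn_univ]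
        intro d hne hdir s hlubd hzs
        have h2 : IsLUB (Prod.snd '' d) s.2 := (isLUB_prod.mp hlubd).2
        have : z ∈ sSup (Prod.snd '' d) := by rw [h2.sSup_eq]; exact hzs
        obtain ⟨u, ⟨V, hVd, rfl⟩, hzu⟩ := Opens.mem_sSup.mp this
        exact ⟨V, hVd, hzu⟩
    have hQ1meet : ∀ y : L, y ∈ W.1 → (S ∩ Q1 y).Nonempty := by
      intro y hy
      have : y ∈ sSup (Prod.fst '' S) := by rw [hlub1.sSup_eq]; exact hy
      obtain ⟨u, ⟨V, hVS, rfl⟩, hyu⟩ := Opens.mem_sSup.mp this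
      exact ⟨V, hVS, hyu⟩
    have hQ2meet : ∀ z : P, z ∈ W.2 → (S ∩ Q2 z).Nonempty := by
      intro z hz
      have : z ∈ sSup (Prod.snd '' S) := by rw [hlub2.sSup_eq]; exact hz
      obtain ⟨u, ⟨V, hVS, rfl⟩, hzu⟩ := Opens.mem_sSup.mp this
      exact ⟨V, hVS, hzu⟩
    -- finite sets of points with small codes
    have hE1fin : ∀ k : ℕ, {y : L | f y ≤ k ∧ y ∈ W.1}.Finite := by
      intro k
      apply Set.Finite.subset ((Set.finite_Iic k).preimage hf.injOn)
      intro y hy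
      exact hy.1
    have hE2fin : ∀ k : ℕ, {z : P | g z ≤ k ∧ z ∈ W.2}.Finite := by
      intro k
      apply Set.Finite.subset ((Set.finite_Iic k).preimage hg.injOn)
      intro z hz
      exact hz.1
    -- the elements `a' k` of `S` containing all points of codes `≤ k`
    have hmeet : ∀ k : ℕ, (S ∩ ((⋂ y ∈ (hE1fin k).toFinset, Q1 y) ∩
        (⋂ z ∈ (hE2fin k).toFinset, Q2 z))).Nonempty := by
      intro k
      have h1 : (S ∩ ⋂ y ∈ (hE1fin k).toFinset, Q1 y).Nonempty := by
        apply preirreducible_finset_inter hSirr.2 hSirr.1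
        · exact fun y _ => hQ1open y
        · intro y hy
          rw [Set.Finite.mem_toFinset] at hy
          exact hQ1meet y hy.2
      have h2 : (S ∩ ⋂ z ∈ (hE2fin k).toFinset, Q2 z).Nonempty := by
        apply preirreducible_finset_inter hSirr.2 hSirr.1
        · exact fun z _ => hQ2open z
        · intro z hz
          rw [Set.Finite.mem_toFinset] at hz
          exact hQ2meet z hz.2
      exact hSirr.2 _ _ (isOpen_biInter_finset fun y _ => hQ1open y)
        (isOpen_biInter_finset fun z _ => hQ2open z) h1 h2
    choose a' ha'S ha'Q using fun k => hmeet k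
    have ha'1 : ∀ k, ∀ y : L, f y ≤ k → y ∈ W.1 → y ∈ (a' k).1 := by
      intro k y hyk hyW
      have h1 := (ha'Q k).1
      simp only [Set.mem_iInter] at h1
      exact h1 y (by rw [Set.Finite.mem_toFinset]; exact ⟨hyk, hyW⟩)
    have ha'2 : ∀ k, ∀ z : P, g z ≤ k → z ∈ W.2 → z ∈ (a' k).2 := by
      intro k z hzk hzW
      have h2 := (ha'Q k).2
      simp only [Set.mem_iInter] at h2
      exact h2 z (by rw [Set.Finite.mem_toFinset]; exact ⟨hzk, hzW⟩)
    -- replace `a' k` by `a k := a' k ⊓ W ∈ S`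
    set a : ℕ → C := fun k => a' k ⊓ W with ha
    have haS : ∀ k, a k ∈ S := fun k => hlow inf_le_left (ha'S k)
    have haW : ∀ k, a k ≤ W := fun k => inf_le_right
    -- component set-families
    set A1 : ℕ → Set L := fun k => ((a k).1 : Set L) with hA1
    set A2 : ℕ → Set P := fun k => ((a k).2 : Set P) with hA2
    have hA1open : ∀ k, IsOpen (A1 k) := fun k => (a k).1.isOpen
    have hA2open : ∀ k, IsOpen (A2 k) := fun k => (a k).2.isOpen
    have hW1open : IsOpen (W.1 : Set L) := W.1.isOpen
    have hW2open : IsOpen (W.2 : Set P) := W.2.isOpen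
    have hev1 : ∀ w ∈ (W.1 : Set L), ∀ k, f w ≤ k → w ∈ A1 k := by
      intro w hw k hk
      show w ∈ (((a' k).1 ⊓ W.1 : ScottOpens L) : Set L)
      rw [Opens.coe_inf]
      exact ⟨ha'1 k w hk hw, hw⟩
    have hev2 : ∀ w ∈ (W.2 : Set P), ∀ k, g w ≤ k → w ∈ A2 k := by
      intro w hw k hk
      show w ∈ (((a' k).2 ⊓ W.2 : ScottOpens P) : Set P)
      rw [Opens.coe_inf]
      exact ⟨ha'2 k w hk hw, hw⟩
    -- the open chain approximating W
    have hU1open : ∀ n, IsOpen ((W.1 : Set L) ∩ ⋂ (k : ℕ) (_ : n ≤ k), A1 k) :=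
      fun n => isOpen_inter_tail_iInter hW1open hA1open hev1 n
    have hU2open : ∀ n, IsOpen ((W.2 : Set P) ∩ ⋂ (k : ℕ) (_ : n ≤ k), A2 k) :=
      fun n => isOpen_inter_tail_iInter hW2open hA2open hev2 n
    set U : ℕ → C := fun n =>
      (⟨(W.1 : Set L) ∩ ⋂ (k : ℕ) (_ : n ≤ k), A1 k, hU1open n⟩,
       ⟨(W.2 : Set P) ∩ ⋂ (k : ℕ) (_ : n ≤ k), A2 k, hU2open n⟩) with hU
    have hUa : ∀ n, U n ≤ a n := by
      intro n
      constructor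
      · rw [← SetLike.coe_subset_coe]
        intro x hx
        have := hx.2
        simp only [Set.mem_iInter] at this
        exact this n le_rfl
      · rw [← SetLike.coe_subset_coe]
        intro x hx
        have := hx.2
        simp only [Set.mem_iInter] at this
        exact this n le_rfl
    have hUS : ∀ n, U n ∈ S := fun n => hlow (hUa n) (haS n)
    have hUmono : Monotone U := by
      intro n m hnm
      constructor
      · rw [← SetLike.coe_subset_coe]
        intro x hx
        refine ⟨hx.1, ?_⟩
        have := hx.2
        simp only [Set.mem_iInter] at this ⊢
        exact fun k hk => this k (le_trans hnm hk)
      · rw [← SetLike.coe_subset_coe]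
        intro x hx
        refine ⟨hx.1, ?_⟩
        have := hx.2
        simp only [Set.mem_iInter] at this ⊢
        exact fun k hk => this k (le_trans hnm hk)
    have hUdir : DirectedOn (· ≤ ·) (Set.range U) :=
      (hUmono.directed_le).directedOn_range
    have hUlub : IsLUB (Set.range U) W := by
      rw [isLUB_prod]
      constructor
      · constructor
        · rintro u ⟨V, ⟨n, rfl⟩, rfl⟩
          rw [← SetLike.coe_subset_coe]
          exact Set.inter_subset_left
        · intro b hb
          rw [← SetLike.coe_subset_coe]
          intro w hw
          have hUmem : w ∈ ((U (f w)).1 : Set L) := by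
            refine ⟨hw, ?_⟩
            simp only [Set.mem_iInter]
            exact fun k hk => hev1 w hw k hk
          have hle : (U (f w)).1 ≤ b := hb ⟨U (f w), ⟨f w, rfl⟩, rfl⟩
          exact (SetLike.coe_subset_coe.mpr hle) hUmem
      · constructor
        · rintro u ⟨V, ⟨n, rfl⟩, rfl⟩
          rw [← SetLike.coe_subset_coe]
          exact Set.inter_subset_left
        · intro b hb
          rw [← SetLike.coe_subset_coe]
          intro w hw
          have hUmem : w ∈ ((U (g w)).2 : Set P) := by
            refine ⟨hw, ?_⟩
            simp only [Set.mem_iInter]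
            exact fun k hk => hev2 w hw k hk
          have hle : (U (g w)).2 ≤ b := hb ⟨U (g w), ⟨g w, rfl⟩, rfl⟩
          exact (SetLike.coe_subset_coe.mpr hle) hUmem
    have hWmem : W ∈ S := by
      refine hdsc ?_ (Set.range_nonempty U) hUdir hUlub
      rintro _ ⟨n, rfl⟩
      exact hUS n
    refine ⟨W, ?_⟩
    rw [isGenericPoint_def, Topology.IsScott.closure_singleton]
    apply Set.Subset.antisymm
    · intro b hb
      exact hlow hb hWmem
    · intro b hb
      exact le_sSup hb
end

section
/- Let X be a countable directed determined space and let X* = O(X) be its complete lattice of open sets ordered by inclusion. Then the Scott space ΣX* is sober. -/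
open Topology TopologicalSpace

/-- A T₀ space is *directed determined* if an upper set `U` (in the specialization order
`x ≤ y ↔ x ∈ closure {y}`) is open iff for every directed subset `D` (directed in the
specialization order), `closure D ∩ U ≠ ∅` implies `D ∩ U ≠ ∅`. -/
def DirectedDetermined (X : Type) [TopologicalSpace X] : Prop :=
  ∀ U : Set X, (∀ x y : X, x ∈ closure {y} → x ∈ U → y ∈ U) →
    (IsOpen U ↔ ∀ D : Set X, D.Nonempty → DirectedOn (fun a b => a ∈ closure {b}) D →
      (closure D ∩ U).Nonempty → (D ∩ U).Nonempty)

section Aux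

variable {X : Type} [TopologicalSpace X]

/-- Open sets are closed upwards in the specialization order. -/
lemma open_up {o : Set X} (ho : IsOpen o) {a b : X} (hab : a ∈ closure ({b} : Set X))
    (ha : a ∈ o) : b ∈ o := by
  rcases (mem_closure_iff.mp hab) o ho ha with ⟨y, hyo, hyb⟩
  rcases hyb with rfl
  exact hyo

/-- Transitivity of the specialization relation. -/
lemma spec_trans {a b c : X} (h1 : a ∈ closure ({b} : Set X))
    (h2 : b ∈ closure ({c} : Set X)) : a ∈ closure ({c} : Set X) := by
  rw [mem_closure_iff] at h1 h2 ⊢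
  intro o ho hao
  rcases h1 o ho hao with ⟨y, hyo, hyb⟩
  rcases hyb with rfl
  exact h2 o ho hyo

end Aux

/-- For a countable directed determined space `X`, the Scott space `ΣX*` of the
complete lattice `X* = O(X)` of open sets of `X` is sober, i.e. it is T₀ and every irreducible
closed subset is the closure of a (unique) point. -/
theorem scottSpace_opens_sober_of_directedDetermined
    (X : Type) [TopologicalSpace X] [T0Space X] [Countable X] (hX : DirectedDetermined X) :
    @T0Space (Opens X) (Topology.scott (Opens X) Set.univ) ∧
    @QuasiSober (Opens X) (Topology.scott (Opens X) Set.univ) := by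
  letI tsp : TopologicalSpace (Opens X) := Topology.scott (Opens X) Set.univ
  haveI : Topology.IsScott (Opens X) Set.univ := ⟨rfl⟩
  constructor
  · infer_instance
  · constructor
    intro A hirr hclosed
    have hA_lower : IsLowerSet A := Topology.IsScott.isLowerSet_of_isClosed hclosed
    -- the "point-diamond" sets are Scott-open
    have hdiam : ∀ z : X, IsOpen {w : Opens X | z ∈ w} := by
      intro z
      rw [Topology.IsScott.isOpen_iff_isUpperSet_and_dirSupInaccOn (D := Set.univ)]
      constructor
      · intro w w' hww' hz
        exact hww' hz
      · intro d _ _ _ a hlub ha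
        have : z ∈ sSup d := by rwa [hlub.sSup_eq]
        rcases Opens.mem_sSup.mp this with ⟨w, hwd, hzw⟩
        exact ⟨w, hwd, hzw⟩
    -- irreducibility: every finite subset of points covered by `A` lies in a single member of `A`
    have hmeet : ∀ F : Set X, F.Finite → (∀ y ∈ F, ∃ w ∈ A, y ∈ w) →
        ∃ a ∈ A, ∀ y ∈ F, y ∈ a := by
      intro F hF
      refine Set.Finite.induction_on
        (motive := fun F _ => (∀ y ∈ F, ∃ w ∈ A, y ∈ w) → ∃ a ∈ A, ∀ y ∈ F, y ∈ a) F hF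
        (fun _ => ⟨hirr.1.choose, hirr.1.choose_spec, fun y hy => absurd hy (by simp)⟩)
        (fun {y F} hyF hFfin ih hall => ?_)
      · obtain ⟨a, haA, haF⟩ := ih (fun z hz => hall z (Set.mem_insert_of_mem _ hz))
        obtain ⟨b, hbA, hyb⟩ := hall y (Set.mem_insert _ _)
        have hGopen : IsOpen {w : Opens X | ∀ z ∈ F, z ∈ w} := by
          have : {w : Opens X | ∀ z ∈ F, z ∈ w} = ⋂ z ∈ F, {w : Opens X | z ∈ w} := by
            ext w; simp
          rw [this]
          exact hFfin.isOpen_biInter (fun z _ => hdiam z)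
        have := hirr.2 {w : Opens X | y ∈ w} {w : Opens X | ∀ z ∈ F, z ∈ w}
          (hdiam y) hGopen ⟨b, hbA, hyb⟩ ⟨a, haA, haF⟩
        rcases this with ⟨c, hcA, hcy, hcF⟩
        exact ⟨c, hcA, fun z hz => by
          rcases Set.mem_insert_iff.mp hz with rfl | hz
          · exact hcy
          · exact hcF z hz⟩
    -- enumerate the points of X
    obtain ⟨ind, hind⟩ := Countable.exists_injective_nat X
    -- the approximating members of A
    have hUn : ∀ n : ℕ, ∃ a ∈ A, ∀ y : X, y ∈ sSup A → ind y ≤ n → y ∈ a := by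
      intro n
      have hfin : Set.Finite {y : X | y ∈ sSup A ∧ ind y ≤ n} := by
        apply Set.Finite.subset (Set.Finite.preimage (Set.injOn_of_injective hind)
          (Set.finite_Iic n))
        intro y hy
        exact hy.2
      obtain ⟨a, haA, ha⟩ := hmeet _ hfin (fun y hy => Opens.mem_sSup.mp hy.1)
      exact ⟨a, haA, fun y h1 h2 => ha y ⟨h1, h2⟩⟩
    choose Un hUnA hUnc using hUn
    -- the tail-intersection sets
    set tset : ℕ → Set X := fun N => {x : X | ∀ m, N ≤ m → x ∈ Un m} with htset
    have htup : ∀ N, ∀ x y : X, x ∈ closure {y} → x ∈ tset N → y ∈ tset N := by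
      intro N x y hxy hx m hm
      exact open_up (Un m).isOpen hxy (hx m hm)
    -- KEY: each tail-intersection is open, by directed determinedness
    have htopen : ∀ N, IsOpen (tset N) := by
      intro N
      refine (hX (tset N) (htup N)).mpr ?_
      rintro D hDne hDdir ⟨z, hzcl, hzt⟩
      have hmeetD : ∀ m, N ≤ m → ∃ d ∈ D, d ∈ (Un m : Set X) := by
        intro m hm
        rcases (mem_closure_iff.mp hzcl) (Un m) (Un m).isOpen (hzt m hm) with ⟨d, hdo, hdD⟩
        exact ⟨d, hdD, hdo⟩
      obtain ⟨d₀, hd₀D, hd₀⟩ := hmeetD N le_rfl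
      have hd₀U : d₀ ∈ sSup A := by
        have : Un N ≤ sSup A := le_sSup (hUnA N)
        exact this hd₀
      -- build, by induction, an element of D lying in a window of the Un's, above d₀
      have hwin : ∀ K : ℕ, ∃ d ∈ D, d₀ ∈ closure ({d} : Set X) ∧
          ∀ m, N ≤ m → m ≤ N + K → d ∈ (Un m : Set X) := by
        intro K
        induction K with
        | zero =>
          refine ⟨d₀, hd₀D, subset_closure rfl, ?_⟩
          intro m hm1 hm2
          have : m = N := le_antisymm (by omega) hm1
          rwa [this]
        | succ K ih =>
          obtain ⟨d, hdD, hd₀d, hdwin⟩ := ih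
          obtain ⟨d', hd'D, hd'⟩ := hmeetD (N + K + 1) (by omega)
          obtain ⟨c, hcD, hdc, hd'c⟩ := hDdir d hdD d' hd'D
          refine ⟨c, hcD, spec_trans hd₀d hdc, ?_⟩
          intro m hm1 hm2
          rcases Nat.lt_or_ge m (N + K + 1) with h | h
          · exact open_up (Un m).isOpen hdc (hdwin m hm1 (by omega))
          · have : m = N + K + 1 := by omega
            rw [this]
            exact open_up (Un (N + K + 1)).isOpen hd'c hd'
      obtain ⟨d, hdD, hd₀d, hdwin⟩ := hwin (ind d₀)
      refine ⟨d, hdD, ?_⟩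
      intro m hm
      rcases le_or_gt m (N + ind d₀) with h | h
      · exact hdwin m hm h
      · have hforce : d₀ ∈ (Un m : Set X) := hUnc m d₀ hd₀U (by omega)
        exact open_up (Un m).isOpen hd₀d hforce
    -- the tail-intersections, as opens, belong to A and form a chain with sup `sSup A`
    set tO : ℕ → Opens X := fun N => ⟨tset N, htopen N⟩ with htO
    have htOA : ∀ N, tO N ∈ A := by
      intro N
      have hle : tO N ≤ Un N := fun x hx => hx N le_rfl
      exact hA_lower hle (hUnA N)
    have htOmono : Monotone tO := by
      intro N N' hNN' x hx m hm
      exact hx m (le_trans hNN' hm)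
    have key : sSup A ∈ A := by
      have hDSC : DirSupClosed A := Topology.IsScott.dirSupClosed_of_isClosed hclosed
      have hrange : Set.range tO ⊆ A := by
        rintro _ ⟨N, rfl⟩; exact htOA N
      have hdir : DirectedOn (· ≤ ·) (Set.range tO) := by
        rintro _ ⟨N, rfl⟩ _ ⟨N', rfl⟩
        exact ⟨tO (max N N'), ⟨max N N', rfl⟩, htOmono (le_max_left _ _),
          htOmono (le_max_right _ _)⟩
      have hlub : IsLUB (Set.range tO) (sSup (Set.range tO)) := isLUB_sSup _
      have hmem : sSup (Set.range tO) ∈ A :=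
        hDSC (d := Set.range tO) hrange ⟨tO 0, ⟨0, rfl⟩⟩ hdir hlub
      have heq : sSup (Set.range tO) = sSup A := by
        apply le_antisymm
        · apply sSup_le
          rintro _ ⟨N, rfl⟩
          exact le_sSup (htOA N)
        · intro x hx
          have hxt : x ∈ tO (ind x) := by
            intro m hm
            exact hUnc m x hx hm
          have : tO (ind x) ≤ sSup (Set.range tO) := le_sSup ⟨ind x, rfl⟩
          exact this hxt
      rwa [heq] at hmem
    refine ⟨sSup A, ?_⟩
    rw [IsGenericPoint, Topology.IsScott.closure_singleton]
    apply le_antisymm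
    · intro a ha
      exact hA_lower ha key
    · intro a ha
      exact le_sSup ha
end

section
/- The poset B = ℕ × ℕ × L described in the context is a dcpo; moreover, every directed subset D of B that has no maximum element is of the form D = {(m₀, n₀, (x_k)_{a₀,b₀}) : k ∈ N} for fixed m₀, n₀, a₀, b₀ ∈ ℕ, where (x_k)_{k∈N} is either a cofinal subset of ℕ or a directed subset of ℕ^{<ℕ} without maximum elements, and sup D = (m₀, n₀, ⊤). -/
/-- A subset `D` is directed with respect to the relation `le`:
it is nonempty and any two elements have an upper bound in `D`. -/
def DirectedOn' {α : Type*} (le : α → α → Prop) (D : Set α) : Prop :=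
  D.Nonempty ∧ ∀ x ∈ D, ∀ y ∈ D, ∃ z ∈ D, le x z ∧ le y z

/-- `u` is a least upper bound of `D` with respect to the relation `le`. -/
def IsLub' {α : Type*} (le : α → α → Prop) (D : Set α) (u : α) : Prop :=
  (∀ x ∈ D, le x u) ∧ ∀ v, (∀ x ∈ D, le x v) → le u v

/-- Every directed subset has a least upper bound: `le` makes the carrier a dcpo. -/
def IsDcpoRel {α : Type*} (le : α → α → Prop) : Prop :=
  ∀ D : Set α, DirectedOn' le D → ∃ u, IsLub' le D u

/-- `U` is Scott open with respect to `le`: it is an upper set and every directed subset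
whose least upper bound lies in `U` meets `U`. -/
def ScottOpen' {α : Type*} (le : α → α → Prop) (U : Set α) : Prop :=
  (∀ x y, le x y → x ∈ U → y ∈ U) ∧
    ∀ D u, DirectedOn' le D → IsLub' le D u → u ∈ U → (D ∩ U).Nonempty

/-- `A` is Scott closed with respect to `le`: it is a lower set and contains the least upper
bounds of its directed subsets. -/
def ScottClosed' {α : Type*} (le : α → α → Prop) (A : Set α) : Prop :=
  (∀ x y, le x y → y ∈ A → x ∈ A) ∧
    ∀ D u, D ⊆ A → DirectedOn' le D → IsLub' le D u → u ∈ A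

/-- Sobriety of the Scott space of `le`: the space is T₀ and every irreducible Scott closed
subset is the Scott closure `↓x = {y | le y x}` of a unique point `x`. -/
def SoberRel {α : Type*} (le : α → α → Prop) : Prop :=
  (∀ x y : α, (∀ U : Set α, ScottOpen' le U → (x ∈ U ↔ y ∈ U)) → x = y) ∧
    ∀ C : Set α, ScottClosed' le C → C.Nonempty →
      (∀ A B : Set α, ScottClosed' le A → ScottClosed' le B → C ⊆ A ∪ B → C ⊆ A ∨ C ⊆ B) →
      ∃! x : α, C = {y | le y x}

/-! ### The posets `M`, `L`, `B`, `P₁`, `P₂` of Miao, Xi, Jia, Li, Zhao -/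

/-- `ℕ^{<ℕ}`: nonempty finite words over `ℕ`. -/
abbrev NWord : Type := {l : List ℕ // l ≠ []}

/-- The prefix order on nonempty finite words. -/
def wordLE (v w : NWord) : Prop := v.1 <+: w.1

/-- The word of length 1 corresponding to a natural number. -/
def word1 (k : ℕ) : NWord := ⟨[k], by simp⟩

/-- `s.k`: the word `s` extended by the letter `k`. -/
def wordSnoc (s : NWord) (k : ℕ) : NWord := ⟨s.1 ++ [k], by simp⟩

/-- The poset `M = ℕ ⊔ ℕ^{<ℕ}`, the disjoint sum of `ℕ` and the words. -/
abbrev Mt : Type := ℕ ⊕ NWord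

/-- The (disjoint sum) order on `M`. -/
def Mle : Mt → Mt → Prop
  | Sum.inl a, Sum.inl b => a ≤ b
  | Sum.inr v, Sum.inr w => wordLE v w
  | _, _ => False

/-- The strict order on `M`. -/
def Mlt (x y : Mt) : Prop := Mle x y ∧ x ≠ y

/-- Pairs `(a, b)` of naturals with `a < b`. -/
abbrev Pairt : Type := {p : ℕ × ℕ // p.1 < p.2}

/-- The poset `L = ({(a,b) : a < b} × M) ∪ {⊤}`; `none` is the top element `⊤` and
`some (p, x)` is the element `x_{a,b}` for `p = (a,b)`. -/
abbrev Lt : Type := Option (Pairt × Mt)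

/-- The strict order on `L`: everything (other than `⊤`) is strictly below `⊤ = none`, and
`x_{a,b} < y_{a,b}` iff `x < y` in `M` (with the same tag `(a,b)`). -/
def Llt (u v : Lt) : Prop :=
  (u ≠ none ∧ v = none) ∨ ∃ p x y, u = some (p, x) ∧ v = some (p, y) ∧ Mlt x y

/-- The carrier of the poset `B = ℕ × ℕ × L`. -/
abbrev Bt : Type := ℕ × ℕ × Lt

/-- `⊏₁`: `(m, n, ℓ) ⊏₁ (m, n, ℓ')` whenever `ℓ < ℓ'` in `L`. -/
def sq1 : Bt → Bt → Prop := fun x y =>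
  ∃ m n u v, x = (m, n, u) ∧ y = (m, n, v) ∧ Llt u v

/-- `⊏₂`: `(a, n, x_{a,b}) ⊏₂ (f_{a,b}(x), n+1, ⊤)` for a word `x ∈ ℕ^{<ℕ}`. -/
def sq2 (f : Pairt → NWord → ℕ) : Bt → Bt → Prop := fun x y =>
  ∃ (n : ℕ) (p : Pairt) (w : NWord),
    x = (p.1.1, n, some (p, Sum.inr w)) ∧ y = (f p w, n + 1, (none : Lt))

/-- `⊏₃`: `(b, n, x_{a,b}) ⊏₃ (f_{a,b}(x), n+1, ⊤)` for `x ∈ ℕ`, regarded as a word of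
length 1. -/
def sq3 (f : Pairt → NWord → ℕ) : Bt → Bt → Prop := fun x y =>
  ∃ (n k : ℕ) (p : Pairt),
    x = (p.1.2, n, some (p, Sum.inl k)) ∧ y = (f p (word1 k), n + 1, (none : Lt))

/-- `⊏₄`: `(f_{a,b}(s), n, x_{a,b}) ⊏₄ (f_{a,b}(s.x), n, ⊤)` for a word `s` and `x ∈ ℕ`. -/
def sq4 (f : Pairt → NWord → ℕ) : Bt → Bt → Prop := fun x y =>
  ∃ (n k : ℕ) (p : Pairt) (s : NWord),
    x = (f p s, n, some (p, Sum.inl k)) ∧ y = (f p (wordSnoc s k), n, (none : Lt))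

/-- `⊏ = ⊏₁ ∪ ⊏₂ ∪ ⊏₃ ∪ ⊏₄ ∪ ⊏₁;⊏₂ ∪ ⊏₁;⊏₃ ∪ ⊏₁;⊏₄`. -/
def Bsq (f : Pairt → NWord → ℕ) : Bt → Bt → Prop := fun x y =>
  sq1 x y ∨ sq2 f x y ∨ sq3 f x y ∨ sq4 f x y ∨
    (∃ z, sq1 x z ∧ sq2 f z y) ∨ (∃ z, sq1 x z ∧ sq3 f z y) ∨ (∃ z, sq1 x z ∧ sq4 f z y)

/-- The order `⊑` on `B`: the reflexive closure of `⊏`. -/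
def Ble (f : Pairt → NWord → ℕ) (x y : Bt) : Prop := x = y ∨ Bsq f x y

/-- The hypotheses on the data `i`, `f`: `i` is an injection into `P(ℕ)` with pairwise
disjoint values satisfying `n < k` for all `k ∈ i (m, n)`, and each `f_{a,b}` is a monotone
injection of `ℕ^{<ℕ}` (with the prefix order) into `i (a, b)`. -/
structure IFData (i : Pairt → Set ℕ) (f : Pairt → NWord → ℕ) : Prop where
  inj : Function.Injective i
  disj : ∀ p q : Pairt, p ≠ q → i p ∩ i q = ∅
  gt : ∀ p : Pairt, ∀ k ∈ i p, p.1.2 < k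
  mem : ∀ p w, f p w ∈ i p
  finj : ∀ p, Function.Injective (f p)
  fmono : ∀ p v w, wordLE v w → f p v ≤ f p w

/-!
A step of `⊏` out of `(m, n, x_{a,b})` either stays in the fibre over `(m, n)` and goes up in
`L`, or lands on a top `(m', n', ⊤)`; tops are maximal. So a directed set `D` without maximum
contains no top, lies in a single copy `{(m, n)} × {(a, b)} × M` of `M`, and comes from a directed
set `S ⊆ M` without maximum. Such an `S` lies in `ℕ` or in `ℕ^{<ℕ}` and is unbounded there, since
the value, resp. the word length, strictly increases along `<` in `M`. Besides `(m, n, ⊤)`, an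
upper bound of `D` could only be a top `(m', n', ⊤)` reached by `⊏₂`, `⊏₃` or `⊏₄`; as `f_{a,b}`
is injective and `a ≠ b`, such a top is reached from a single element of `M`, which would then
bound `S`. Hence `sup D = (m, n, ⊤)`.
-/

section DirectedOn'

variable {α β : Type*} {le : α → α → Prop}

theorem DirectedOn'.le_of_maximal {S : Set α} (hS : DirectedOn' le S) {x : α} (hx : x ∈ S)
    (hmax : ∀ y, le x y → y = x) : ∀ y ∈ S, le y x := by
  intro y hy
  obtain ⟨z, -, hxz, hyz⟩ := hS.2 x hx y hy
  rwa [hmax z hxz] at hyz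

theorem DirectedOn'.exists_le_height (h : α → ℕ) (hh : ∀ x y, le x y → x ≠ y → h x < h y)
    {S : Set α} (hS : DirectedOn' le S) (hmax : ¬ ∃ m ∈ S, ∀ x ∈ S, le x m) (n : ℕ) :
    ∃ x ∈ S, n ≤ h x := by
  push Not at hmax
  induction n with
  | zero => exact hS.1.imp fun x hx => ⟨hx, Nat.zero_le _⟩
  | succ n ih =>
    obtain ⟨x, hx, hnx⟩ := ih
    obtain ⟨y, hy, hyx⟩ := hmax x hx
    obtain ⟨z, hz, hxz, hyz⟩ := hS.2 x hx y hy
    have hzx : x ≠ z := by rintro rfl; exact hyx hyz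
    exact ⟨z, hz, by have := hh x z hxz hzx; omega⟩

theorem DirectedOn'.not_exists_upper_bound (h : α → ℕ)
    (hh : ∀ x y, le x y → x ≠ y → h x < h y) {S : Set α} (hS : DirectedOn' le S)
    (hmax : ¬ ∃ m ∈ S, ∀ x ∈ S, le x m) : ¬ ∃ u, ∀ x ∈ S, le x u := by
  rintro ⟨u, hu⟩
  obtain ⟨x, hx, hux⟩ := hS.exists_le_height h hh hmax (h u + 1)
  rcases eq_or_ne x u with rfl | hne
  · omega
  · have := hh x u (hu x hx) hne
    omega

variable {le' : β → β → Prop} {g : β → α}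

theorem DirectedOn'.of_image (hg : ∀ a b, le (g a) (g b) ↔ le' a b) {T : Set β}
    (h : DirectedOn' le (g '' T)) : DirectedOn' le' T := by
  refine ⟨h.1.of_image, fun a ha b hb => ?_⟩
  obtain ⟨_, ⟨c, hc, rfl⟩, hac, hbc⟩ := h.2 _ ⟨a, ha, rfl⟩ _ ⟨b, hb, rfl⟩
  exact ⟨c, hc, (hg a c).1 hac, (hg b c).1 hbc⟩

theorem not_exists_max_of_image (hg : ∀ a b, le (g a) (g b) ↔ le' a b) {T : Set β}
    (h : ¬ ∃ m ∈ g '' T, ∀ x ∈ g '' T, le x m) : ¬ ∃ m ∈ T, ∀ x ∈ T, le' x m := by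
  rintro ⟨m, hm, hmax⟩
  exact h ⟨g m, ⟨m, hm, rfl⟩, by rintro _ ⟨x, hx, rfl⟩; exact (hg x m).2 (hmax x hx)⟩

end DirectedOn'

theorem wordLE_antisymm {u v : NWord} (h₁ : wordLE u v) (h₂ : wordLE v u) : u = v :=
  Subtype.ext (h₁.eq_of_length_le h₂.length_le)

theorem Mle_refl (x : Mt) : Mle x x := by
  cases x
  exacts [le_refl _, List.prefix_refl _]

theorem Mle_trans {x y z : Mt} (h₁ : Mle x y) (h₂ : Mle y z) : Mle x z := by
  cases x <;> cases y <;> cases z <;> simp only [Mle] at *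
  exacts [h₁.trans h₂, List.IsPrefix.trans h₁ h₂]

theorem Mle_antisymm {x y : Mt} (h₁ : Mle x y) (h₂ : Mle y x) : x = y := by
  cases x <;> cases y <;> simp only [Mle] at *
  exacts [congrArg _ (le_antisymm h₁ h₂), congrArg _ (wordLE_antisymm h₁ h₂)]

theorem Mle.isLeft_eq {x y : Mt} (h : Mle x y) : x.isLeft = y.isLeft := by
  cases x <;> cases y <;> simp_all [Mle]

theorem Mlt_trans {x y z : Mt} (h₁ : Mlt x y) (h₂ : Mlt y z) : Mlt x z :=
  ⟨Mle_trans h₁.1 h₂.1, by rintro rfl; exact h₁.2 (Mle_antisymm h₁.1 h₂.1)⟩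

def Mheight : Mt → ℕ := Sum.elim id fun s => s.1.length

theorem Mheight_lt {x y : Mt} (h : Mle x y) (hne : x ≠ y) : Mheight x < Mheight y := by
  cases x <;> cases y <;> simp only [Mle, Mheight, Sum.elim_inl, Sum.elim_inr, id] at *
  · exact lt_of_le_of_ne h (by rintro rfl; exact hne rfl)
  · exact lt_of_le_of_ne h.length_le fun hl =>
      hne (congrArg _ (Subtype.ext (h.eq_of_length_le hl.ge)))

theorem Llt_irrefl (u : Lt) : ¬ Llt u u := by
  rintro (⟨hu, hu'⟩ | ⟨p, x, y, rfl, hxy, hlt⟩)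
  · exact hu hu'
  · simp only [Option.some.injEq, Prod.mk.injEq, true_and] at hxy
    exact hlt.2 hxy

theorem Llt_trans {u v w : Lt} (h₁ : Llt u v) (h₂ : Llt v w) : Llt u w := by
  rcases h₁ with ⟨hu, rfl⟩ | ⟨p, x, y, rfl, rfl, hxy⟩
  · rcases h₂ with ⟨h, -⟩ | ⟨_, _, _, h, -⟩ <;> simp at h
  · rcases h₂ with ⟨-, rfl⟩ | ⟨q, y', z, h, rfl, hyz⟩
    · exact Or.inl ⟨by simp, rfl⟩
    · simp only [Option.some.injEq, Prod.mk.injEq] at h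
      obtain ⟨rfl, rfl⟩ := h
      exact Or.inr ⟨p, x, z, rfl, rfl, Mlt_trans hxy hyz⟩

theorem Llt_some_right_iff {u : Lt} {p : Pairt} {y : Mt} :
    Llt u (some (p, y)) ↔ ∃ x, u = some (p, x) ∧ Mlt x y := by
  constructor
  · rintro (⟨-, h⟩ | ⟨q, x, y', rfl, h, hxy⟩)
    · simp at h
    · simp only [Option.some.injEq, Prod.mk.injEq] at h
      obtain ⟨rfl, rfl⟩ := h
      exact ⟨x, rfl, hxy⟩
  · rintro ⟨x, rfl, hxy⟩
    exact Or.inr ⟨p, x, y, rfl, rfl, hxy⟩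

def sqJump (f : Pairt → NWord → ℕ) (x y : Bt) : Prop := sq2 f x y ∨ sq3 f x y ∨ sq4 f x y

section Order

variable {f : Pairt → NWord → ℕ}

theorem Bsq_iff {x y : Bt} :
    Bsq f x y ↔ sq1 x y ∨ sqJump f x y ∨ ∃ z, sq1 x z ∧ sqJump f z y := by
  simp only [Bsq, sqJump, and_or_left, exists_or, or_assoc]

theorem sq1_iff {x y : Bt} : sq1 x y ↔ x.1 = y.1 ∧ x.2.1 = y.2.1 ∧ Llt x.2.2 y.2.2 := by
  obtain ⟨m, n, u⟩ := x
  obtain ⟨m', n', v⟩ := y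
  simp [sq1, eq_comm, and_assoc]

theorem sq1_trans {x y z : Bt} (h₁ : sq1 x y) (h₂ : sq1 y z) : sq1 x z := by
  rw [sq1_iff] at *
  exact ⟨h₁.1.trans h₂.1, h₁.2.1.trans h₂.2.1, Llt_trans h₁.2.2 h₂.2.2⟩

theorem sq1.ne_none {x y : Bt} (h : sq1 x y) : x.2.2 ≠ none := by
  rintro hx
  rcases (sq1_iff.1 h).2.2 with ⟨hu, -⟩ | ⟨_, _, _, hu, -⟩ <;> simp [hx] at hu

theorem sqJump.ne_none {x y : Bt} (h : sqJump f x y) : x.2.2 ≠ none := by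
  rcases h with ⟨_, _, _, rfl, -⟩ | ⟨_, _, _, rfl, -⟩ | ⟨_, _, _, _, rfl, -⟩ <;> simp

theorem sqJump.eq_none {x y : Bt} (h : sqJump f x y) : y.2.2 = none := by
  rcases h with ⟨_, _, _, -, rfl⟩ | ⟨_, _, _, -, rfl⟩ | ⟨_, _, _, _, -, rfl⟩ <;> rfl

theorem Bsq.ne_none {x y : Bt} (h : Bsq f x y) : x.2.2 ≠ none := by
  rcases Bsq_iff.1 h with h | h | ⟨z, h, -⟩
  exacts [h.ne_none, h.ne_none, h.ne_none]

theorem Bsq.sq1_or_eq_none {x y : Bt} (h : Bsq f x y) : sq1 x y ∨ y.2.2 = none := by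
  rcases Bsq_iff.1 h with h | h | ⟨z, -, h⟩
  exacts [Or.inl h, Or.inr h.eq_none, Or.inr h.eq_none]

theorem Bsq_trans {x y z : Bt} (h₁ : Bsq f x y) (h₂ : Bsq f y z) : Bsq f x z := by
  have hxy : sq1 x y := h₁.sq1_or_eq_none.resolve_right h₂.ne_none
  rcases Bsq_iff.1 h₂ with h | h | ⟨w, hyw, h⟩
  · exact Or.inl (sq1_trans hxy h)
  · exact Bsq_iff.2 (Or.inr (Or.inr ⟨y, hxy, h⟩))
  · exact Bsq_iff.2 (Or.inr (Or.inr ⟨w, sq1_trans hxy hyw, h⟩))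

theorem Bsq_irrefl (x : Bt) : ¬ Bsq f x x := fun h =>
  h.sq1_or_eq_none.elim (fun h' => Llt_irrefl _ (sq1_iff.1 h').2.2) h.ne_none

theorem Ble_isPartialOrder : IsPartialOrder Bt (Ble f) where
  refl _ := Or.inl rfl
  trans _ _ _ := by
    rintro (rfl | h₁) (rfl | h₂)
    exacts [Or.inl rfl, Or.inr h₂, Or.inr h₁, Or.inr (Bsq_trans h₁ h₂)]
  antisymm x y := by
    rintro (rfl | h₁) (h₂ | h₂)
    exacts [rfl, rfl, h₂.symm, (Bsq_irrefl x (Bsq_trans h₁ h₂)).elim]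

end Order

section Components

variable {f : Pairt → NWord → ℕ} {m n : ℕ} {p : Pairt}

theorem Ble_some_right_iff {x : Bt} {y : Mt} :
    Ble f x (m, n, some (p, y)) ↔ ∃ w, x = (m, n, some (p, w)) ∧ Mle w y := by
  constructor
  · rintro (rfl | h)
    · exact ⟨y, rfl, Mle_refl y⟩
    · obtain ⟨hm, hn, hl⟩ := sq1_iff.1 (h.sq1_or_eq_none.resolve_right (by simp))
      obtain ⟨w, hw, hwy⟩ := Llt_some_right_iff.1 hl
      exact ⟨w, Prod.ext hm (Prod.ext hn hw), hwy.1⟩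
  · rintro ⟨w, rfl, hwy⟩
    rcases eq_or_ne w y with rfl | hne
    · exact Or.inl rfl
    · exact Or.inr (Or.inl (sq1_iff.2 ⟨rfl, rfl, Llt_some_right_iff.2 ⟨w, rfl, hwy, hne⟩⟩))

theorem Ble_some_iff {x y : Mt} :
    Ble f (m, n, some (p, x)) (m, n, some (p, y)) ↔ Mle x y := by
  simp [Ble_some_right_iff]

theorem Ble_some_none (x : Mt) : Ble f (m, n, some (p, x)) (m, n, none) :=
  Or.inr (Or.inl (sq1_iff.2 ⟨rfl, rfl, Or.inl ⟨by simp, rfl⟩⟩))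

theorem eq_of_Ble_of_eq_none {x y : Bt} (h : Ble f x y) (hx : x.2.2 = none) : y = x :=
  h.elim Eq.symm fun h => (h.ne_none hx).elim

theorem Ble.eq_or_sqJump {x : Mt} {m' n' : ℕ} (h : Ble f (m, n, some (p, x)) (m', n', none)) :
    (m' = m ∧ n' = n) ∨ ∃ y, Mle x y ∧ sqJump f (m, n, some (p, y)) (m', n', none) := by
  rcases Bsq_iff.1 (h.resolve_left (by simp)) with h | h | ⟨z, hz, h⟩
  · obtain ⟨hm, hn, -⟩ := sq1_iff.1 h
    exact Or.inl ⟨hm.symm, hn.symm⟩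
  · exact Or.inr ⟨x, Mle_refl x, h⟩
  · obtain ⟨mz, nz, _ | ⟨q, y⟩⟩ := z
    · exact (h.ne_none rfl).elim
    obtain ⟨w, hw, hxy⟩ :=
      Ble_some_right_iff.1 (Or.inr (Or.inl hz) : Ble f _ (mz, nz, some (q, y)))
    simp only [Prod.mk.injEq, Option.some.injEq] at hw
    obtain ⟨rfl, rfl, rfl, rfl⟩ := hw
    exact Or.inr ⟨y, hxy, h⟩

theorem sq2_some_iff {x : Mt} {z : Bt} :
    sq2 f (m, n, some (p, x)) z ↔
      ∃ s, x = Sum.inr s ∧ m = p.1.1 ∧ z = (f p s, n + 1, none) := by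
  constructor
  · rintro ⟨n', q, s, h, rfl⟩
    simp only [Prod.mk.injEq, Option.some.injEq] at h
    obtain ⟨rfl, rfl, rfl, rfl⟩ := h
    exact ⟨s, rfl, rfl, rfl⟩
  · rintro ⟨s, rfl, rfl, rfl⟩
    exact ⟨n, p, s, rfl, rfl⟩

theorem sq3_some_iff {x : Mt} {z : Bt} :
    sq3 f (m, n, some (p, x)) z ↔
      ∃ k, x = Sum.inl k ∧ m = p.1.2 ∧ z = (f p (word1 k), n + 1, none) := by
  constructor
  · rintro ⟨n', k, q, h, rfl⟩
    simp only [Prod.mk.injEq, Option.some.injEq] at h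
    obtain ⟨rfl, rfl, rfl, rfl⟩ := h
    exact ⟨k, rfl, rfl, rfl⟩
  · rintro ⟨k, rfl, rfl, rfl⟩
    exact ⟨n, k, p, rfl, rfl⟩

theorem sq4_some_iff {x : Mt} {z : Bt} :
    sq4 f (m, n, some (p, x)) z ↔
      ∃ k s, x = Sum.inl k ∧ m = f p s ∧ z = (f p (wordSnoc s k), n, none) := by
  constructor
  · rintro ⟨n', k, q, s, h, rfl⟩
    simp only [Prod.mk.injEq, Option.some.injEq] at h
    obtain ⟨rfl, rfl, rfl, rfl⟩ := h
    exact ⟨k, s, rfl, rfl, rfl⟩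
  · rintro ⟨k, s, rfl, rfl, rfl⟩
    exact ⟨n, k, p, s, rfl, rfl⟩

theorem word1_injective : Function.Injective word1 := fun a b h => by
  simpa [word1] using congrArg Subtype.val h

theorem wordSnoc_injective (s : NWord) : Function.Injective (wordSnoc s) := fun a b h => by
  simpa [wordSnoc] using congrArg Subtype.val h

theorem sqJump_unique (hf : ∀ p, Function.Injective (f p)) {x y : Mt} {z : Bt}
    (hx : sqJump f (m, n, some (p, x)) z) (hy : sqJump f (m, n, some (p, y)) z) : x = y := by
  -- `⊏₂` and `⊏₃` leave from the distinct first coordinates `a < b`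
  have hab := p.2
  simp only [sqJump, sq2_some_iff, sq3_some_iff, sq4_some_iff] at hx hy
  rcases hx with ⟨s, rfl, hm, rfl⟩ | ⟨k, rfl, hm, rfl⟩ | ⟨k, s, rfl, hm, rfl⟩ <;>
  rcases hy with ⟨s', rfl, hm', h⟩ | ⟨k', rfl, hm', h⟩ | ⟨k', s', rfl, hm', h⟩ <;>
  simp only [Prod.mk.injEq, and_true, (hf p).eq_iff, word1_injective.eq_iff] at h
  all_goals try first | omega | (subst h; rfl)
  obtain rfl := hf p (hm.symm.trans hm')
  rw [(wordSnoc_injective s).eq_iff] at h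
  rw [h]

end Components

theorem Mt_directed_cases {S : Set Mt} (hS : DirectedOn' Mle S)
    (hmax : ¬ ∃ m ∈ S, ∀ x ∈ S, Mle x m) :
    (∃ T : Set ℕ, S = Sum.inl '' T ∧ ∀ n : ℕ, ∃ k ∈ T, n ≤ k) ∨
      (∃ T : Set NWord, S = Sum.inr '' T ∧ DirectedOn' wordLE T ∧
        ¬ ∃ w ∈ T, ∀ v ∈ T, wordLE v w) := by
  obtain ⟨w₀, hw₀⟩ := hS.1
  have hside : ∀ w ∈ S, w.isLeft = w₀.isLeft := fun w hw => by
    obtain ⟨z, -, hwz, h₀z⟩ := hS.2 w hw w₀ hw₀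
    rw [hwz.isLeft_eq, h₀z.isLeft_eq]
  rcases w₀ with k₀ | s₀
  · have hST : S = Sum.inl '' (Sum.inl ⁻¹' S) :=
      (Set.image_preimage_eq_of_subset (Set.range_inl ▸ hside)).symm
    refine Or.inl ⟨_, hST, fun n => ?_⟩
    obtain ⟨x, hx, hnx⟩ := hS.exists_le_height Mheight (fun _ _ => Mheight_lt) hmax n
    obtain ⟨k, rfl⟩ := Sum.isLeft_iff.1 (hside x hx)
    exact ⟨k, hx, hnx⟩
  · have hST : S = Sum.inr '' (Sum.inr ⁻¹' S) :=
      (Set.image_preimage_eq_of_subset fun w hw =>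
        Set.range_inr ▸ Sum.isLeft_eq_false.1 (hside w hw)).symm
    rw [hST] at hS hmax
    have hemb : ∀ a b, Mle (Sum.inr a) (Sum.inr b) ↔ wordLE a b := fun _ _ => Iff.rfl
    exact Or.inr ⟨_, hST, hS.of_image hemb, not_exists_max_of_image hemb hmax⟩

section Classification

variable {f : Pairt → NWord → ℕ} {m n : ℕ} {p : Pairt}

theorem DirectedOn'.exists_eq_image {D : Set Bt} (hD : DirectedOn' (Ble f) D)
    (hmax : ¬ ∃ m ∈ D, ∀ x ∈ D, Ble f x m) :
    ∃ (m n : ℕ) (p : Pairt) (S : Set Mt), D = (fun x => (m, n, some (p, x))) '' S := by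
  have hsome : ∀ x ∈ D, x.2.2 ≠ none := fun x hx hx' =>
    hmax ⟨x, hx, hD.le_of_maximal hx fun y hy => eq_of_Ble_of_eq_none hy hx'⟩
  obtain ⟨⟨m, n, _ | ⟨p, w₀⟩⟩, hx₀⟩ := hD.1
  · exact (hsome _ hx₀ rfl).elim
  have hform : ∀ x ∈ D, ∃ w, x = (m, n, some (p, w)) := by
    intro x hx
    obtain ⟨⟨mz, nz, _ | ⟨q, wz⟩⟩, hz, hxz, h₀z⟩ := hD.2 x hx _ hx₀
    · exact (hsome _ hz rfl).elim
    obtain ⟨w, hw, -⟩ := Ble_some_right_iff.1 h₀z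
    simp only [Prod.mk.injEq, Option.some.injEq] at hw
    obtain ⟨rfl, rfl, rfl, -⟩ := hw
    obtain ⟨w, rfl, -⟩ := Ble_some_right_iff.1 hxz
    exact ⟨w, rfl⟩
  refine ⟨m, n, p, {x | (m, n, some (p, x)) ∈ D}, Set.ext fun x => ⟨fun hx => ?_, ?_⟩⟩
  · obtain ⟨w, rfl⟩ := hform x hx
    exact ⟨w, hx, rfl⟩
  · rintro ⟨w, hw, rfl⟩
    exact hw

theorem exists_upper_bound_of_Ble (hf : ∀ p, Function.Injective (f p)) {S : Set Mt}
    (hS : S.Nonempty) {v : Bt} (hv : ∀ x ∈ S, Ble f (m, n, some (p, x)) v)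
    (hne : v ≠ (m, n, none)) : ∃ u, ∀ x ∈ S, Mle x u := by
  obtain ⟨mv, nv, _ | ⟨q, u⟩⟩ := v
  · have hjump : ∀ x ∈ S, ∃ y, Mle x y ∧ sqJump f (m, n, some (p, y)) (mv, nv, none) :=
      fun x hx => (hv x hx).eq_or_sqJump.resolve_left fun ⟨hm, hn⟩ => hne (by rw [hm, hn])
    obtain ⟨x₀, hx₀⟩ := hS
    obtain ⟨u₀, -, hu₀⟩ := hjump x₀ hx₀
    refine ⟨u₀, fun x hx => ?_⟩
    obtain ⟨y, hxy, hy⟩ := hjump x hx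
    rwa [sqJump_unique hf hy hu₀] at hxy
  · refine ⟨u, fun x hx => ?_⟩
    obtain ⟨w, hw, hwu⟩ := Ble_some_right_iff.1 (hv x hx)
    simp only [Prod.mk.injEq, Option.some.injEq] at hw
    rwa [hw.2.2.2]

theorem isLub'_none (hf : ∀ p, Function.Injective (f p)) {S : Set Mt}
    (hS : DirectedOn' Mle S) (hmax : ¬ ∃ m ∈ S, ∀ x ∈ S, Mle x m) :
    IsLub' (Ble f) ((fun x => (m, n, some (p, x))) '' S) (m, n, none) := by
  refine ⟨by rintro _ ⟨x, -, rfl⟩; exact Ble_some_none x, fun v hv => ?_⟩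
  by_contra hle
  exact hS.not_exists_upper_bound Mheight (fun _ _ => Mheight_lt) hmax
    (exists_upper_bound_of_Ble hf hS.1 (fun x hx => hv _ ⟨x, hx, rfl⟩)
      fun h => hle (Or.inl h.symm))

theorem DirectedOn'.Ble_form (hf : ∀ p, Function.Injective (f p)) {D : Set Bt}
    (hD : DirectedOn' (Ble f) D) (hmax : ¬ ∃ m ∈ D, ∀ x ∈ D, Ble f x m) :
    ∃ (m₀ n₀ : ℕ) (p : Pairt) (S : Set Mt),
      D = {b : Bt | ∃ x ∈ S, b = (m₀, n₀, some (p, x))} ∧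
      ((∃ T : Set ℕ, S = Sum.inl '' T ∧ ∀ n : ℕ, ∃ k ∈ T, n ≤ k) ∨
       (∃ T : Set NWord, S = Sum.inr '' T ∧ DirectedOn' wordLE T ∧
          ¬ ∃ w ∈ T, ∀ v ∈ T, wordLE v w)) ∧
      IsLub' (Ble f) D (m₀, n₀, (none : Lt)) := by
  obtain ⟨m, n, p, S, rfl⟩ := hD.exists_eq_image hmax
  have hemb : ∀ x y, Ble f (m, n, some (p, x)) (m, n, some (p, y)) ↔ Mle x y :=
    fun _ _ => Ble_some_iff
  have hS := hD.of_image hemb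
  have hSmax := not_exists_max_of_image hemb hmax
  exact ⟨m, n, p, S, by ext; simp [eq_comm], Mt_directed_cases hS hSmax,
    isLub'_none hf hS hSmax⟩

end Classification

/-- The poset `B = ℕ × ℕ × L` (with the order `⊑`) is a dcpo; moreover, every
directed subset `D` of `B` without a maximum element is of the form
`D = {(m₀, n₀, (x)_{a₀,b₀}) : x ∈ S}` for fixed `m₀, n₀` and a fixed pair `(a₀, b₀)` with
`a₀ < b₀`, where `S` is either a cofinal subset of `ℕ` or a directed subset of `ℕ^{<ℕ}`
without maximum elements, and `sup D = (m₀, n₀, ⊤)`. -/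
theorem B_isDcpo_and_directed_form (i : Pairt → Set ℕ) (f : Pairt → NWord → ℕ)
    (hif : IFData i f) :
    IsPartialOrder Bt (Ble f) ∧
    IsDcpoRel (Ble f) ∧
    ∀ D : Set Bt, DirectedOn' (Ble f) D → (¬ ∃ m ∈ D, ∀ x ∈ D, Ble f x m) →
      ∃ (m₀ n₀ : ℕ) (p : Pairt) (S : Set Mt),
        D = {b : Bt | ∃ x ∈ S, b = (m₀, n₀, some (p, x))} ∧
        ((∃ T : Set ℕ, S = Sum.inl '' T ∧ ∀ n : ℕ, ∃ k ∈ T, n ≤ k) ∨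
         (∃ T : Set NWord, S = Sum.inr '' T ∧ DirectedOn' wordLE T ∧
            ¬ ∃ w ∈ T, ∀ v ∈ T, wordLE v w)) ∧
        IsLub' (Ble f) D (m₀, n₀, (none : Lt)) := by
  refine ⟨Ble_isPartialOrder, fun D hD => ?_, fun D hD hmax => hD.Ble_form hif.finj hmax⟩
  by_cases hmax : ∃ m ∈ D, ∀ x ∈ D, Ble f x m
  · obtain ⟨m, hm, hle⟩ := hmax
    exact ⟨m, hle, fun v hv => hv m hm⟩
  · obtain ⟨m, n, p, S, -, -, hlub⟩ := hD.Ble_form hif.finj hmax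
    exact ⟨_, hlub⟩
end
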